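/- A semiring S is additively archimedean if and only if the matrix semiring M_n(S) is additively archimedean, for any n ≥ 1. -/

import Mathlib

/-- A semiring in the sense of the paper: associative `+` and `*`, `+` commutative,
`*` distributing over `+` from both sides; no zero or unity assumed. -/
class PSemiring (S : Type) extends AddCommSemigroup S, Semigroup S where
  left_distrib : ∀ a b c : S, a * (b + c) = a * b + a * c
  right_distrib : ∀ a b c : S, (a + b) * c = a * c + b * c

section Defs
variable {T : Type} [Add T] [Mul T]

def MulAbsorbing (w : T) : Prop := ∀ a : T, a * w = w ∧ w * a = w
def AddAbsorbing (w : T) : Prop := ∀ a : T, a + w = w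
def AddNeutral (w : T) : Prop := ∀ a : T, a + w = a
def BiAbsorbing (w : T) : Prop := MulAbsorbing w ∧ AddAbsorbing w
def IsZero (w : T) : Prop := MulAbsorbing w ∧ AddNeutral w
def IsUnity (w : T) : Prop := ∀ a : T, w * a = a ∧ a * w = a

def IsBiIdeal (I : Set T) : Prop :=
  I.Nonempty ∧ ∀ a ∈ I, ∀ s : T, a + s ∈ I ∧ a * s ∈ I ∧ s * a ∈ I

def IsCongruence (r : T → T → Prop) : Prop :=
  Equivalence r ∧ (∀ a b c d : T, r a b → r c d → r (a + c) (b + d)) ∧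
    (∀ a b c d : T, r a b → r c d → r (a * c) (b * d))

/-- The standard quasiordering on a semiring. -/
def leS (a b : T) : Prop := a = b ∨ ∃ c : T, a + c = b

/-- `addPow m b` is the `(m+1)`-fold sum `b + ⋯ + b`. -/
def addPow : ℕ → T → T
  | 0, b => b
  | m + 1, b => addPow m b + b

end Defs

def CongSimple (T : Type) [Add T] [Mul T] : Prop :=
  (∃ a b : T, a ≠ b) ∧
    ∀ r : T → T → Prop, IsCongruence r →
      (∀ a b : T, r a b ↔ a = b) ∨ (∀ a b : T, r a b)

def BiIdealSimple (T : Type) [Add T] [Mul T] : Prop :=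
  (∃ a b : T, a ≠ b) ∧
    ∀ I : Set T, IsBiIdeal I → (∃ w : T, I = {w}) ∨ I = Set.univ

def BiIdealFree (T : Type) [Add T] [Mul T] : Prop :=
  (∃ a b : T, a ≠ b) ∧ ∀ I : Set T, IsBiIdeal I → I = Set.univ

/-- Sum of a nonempty family indexed by `Fin (n+1)`. -/
def finSum {S : Type} [Add S] : ∀ {n : ℕ}, (Fin (n + 1) → S) → S
  | 0, f => f 0
  | n + 1, f => finSum (fun i : Fin (n + 1) => f i.castSucc) + f (Fin.last (n + 1))

/-- `Mat n S` is the semiring of `(n+1) × (n+1)` matrices over `S`. -/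
structure Mat (n : ℕ) (S : Type) where
  entry : Fin (n + 1) → Fin (n + 1) → S

instance {n : ℕ} {S : Type} [Add S] : Add (Mat n S) :=
  ⟨fun A B => ⟨fun i j => A.entry i j + B.entry i j⟩⟩

instance {n : ℕ} {S : Type} [Add S] [Mul S] : Mul (Mat n S) :=
  ⟨fun A B => ⟨fun i j => finSum (fun k => A.entry i k * B.entry k j)⟩⟩

/-- The constant matrix `ā`. -/
def Mat.const (n : ℕ) {S : Type} (a : S) : Mat n S := ⟨fun _ _ => a⟩

/-!
Sums and the quasiorder `leS` of `M_n(S)` are computed entrywise, except that `leS` may hold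
by equality in some entries and by a proper summand in others. Adding one more copy of `b`
turns every `leS a (addPow m b)` into an equation `a + c = addPow (m + 1) b`, and these glue
into a matrix witness; finitely many entries allow one common `m`. Conversely, constant
matrices transport the property back to `S`.
-/

attribute [ext] Mat

def IsAddArchimedean (T : Type) [Add T] : Prop :=
  ∀ a b : T, ∃ m : ℕ, leS a (addPow m b)

section AddSemigroup

variable {T : Type} [AddSemigroup T] {a b : T}

theorem exists_add_eq_addPow_succ_of_leS {m : ℕ} (h : leS a (addPow m b)) :
    ∃ c, a + c = addPow (m + 1) b := by
  rcases h with h | ⟨c, h⟩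
  · exact ⟨b, by rw [h]; rfl⟩
  · exact ⟨c + b, by rw [← add_assoc, h]; rfl⟩

theorem leS_addPow_of_le {m m' : ℕ} (hm : m ≤ m') (h : leS a (addPow m b)) :
    leS a (addPow m' b) := by
  induction m', hm using Nat.le_induction with
  | base => exact h
  | succ k _ ih => exact Or.inr (exists_add_eq_addPow_succ_of_leS ih)

theorem exists_forall_leS_addPow {ι : Type} [Finite ι] {a b : ι → T}
    (h : ∀ i, ∃ m, leS (a i) (addPow m (b i))) : ∃ m, ∀ i, leS (a i) (addPow m (b i)) := by
  choose f hf using h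
  obtain ⟨M, hM⟩ := Finite.exists_le f
  exact ⟨M, fun i => leS_addPow_of_le (hM i) (hf i)⟩

end AddSemigroup

namespace Mat

variable {n : ℕ} {S : Type}

@[simp]
theorem const_entry (a : S) (i j : Fin (n + 1)) : (Mat.const n a).entry i j = a :=
  rfl

@[simp]
theorem addPow_entry [Add S] (m : ℕ) (B : Mat n S) (i j : Fin (n + 1)) :
    (addPow m B).entry i j = addPow m (B.entry i j) := by
  induction m with
  | zero => rfl
  | succ m ih => exact congrArg (· + B.entry i j) ih

theorem leS_entry [Add S] {A B : Mat n S} (h : leS A B) (i j : Fin (n + 1)) :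
    leS (A.entry i j) (B.entry i j) := by
  rcases h with rfl | ⟨C, rfl⟩
  · exact Or.inl rfl
  · exact Or.inr ⟨C.entry i j, rfl⟩

theorem leS_of_forall_exists_add_eq [Add S] {A B : Mat n S}
    (h : ∀ i j, ∃ c, A.entry i j + c = B.entry i j) : leS A B := by
  choose C hC using h
  exact Or.inr ⟨⟨C⟩, Mat.ext (funext₂ hC)⟩

theorem isAddArchimedean [AddSemigroup S] (h : IsAddArchimedean S) :
    IsAddArchimedean (Mat n S) := by
  intro A B
  obtain ⟨m, hm⟩ := exists_forall_leS_addPow (ι := Fin (n + 1) × Fin (n + 1))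
    fun ij => h (A.entry ij.1 ij.2) (B.entry ij.1 ij.2)
  refine ⟨m + 1, leS_of_forall_exists_add_eq fun i j => ?_⟩
  rw [addPow_entry]
  exact exists_add_eq_addPow_succ_of_leS (hm (i, j))

theorem isAddArchimedean_of_mat [Add S] (h : IsAddArchimedean (Mat n S)) :
    IsAddArchimedean S := by
  intro a b
  obtain ⟨m, hm⟩ := h (Mat.const n a) (Mat.const n b)
  refine ⟨m, ?_⟩
  simpa using leS_entry hm 0 0

theorem isAddArchimedean_iff [AddSemigroup S] : IsAddArchimedean (Mat n S) ↔ IsAddArchimedean S :=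
  ⟨isAddArchimedean_of_mat, isAddArchimedean⟩

end Mat

/-- `S` is additively archimedean iff `M_n(S)` is
(`Mat n S` has size `n+1`, covering all `n ≥ 1`). -/
theorem stmt18 {S : Type} [PSemiring S] (n : ℕ) :
    (∀ a b : S, ∃ m : ℕ, leS a (addPow m b)) ↔
      (∀ A B : Mat n S, ∃ m : ℕ, leS A (addPow m B)) :=
  Mat.isAddArchimedean_iff.symm
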